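/- For every symmetric nonnegative matrix A, st₊(A) ≤ 2·rk₊(A). -/

import Mathlib

open Matrix

noncomputable def sntRank {m : Type*} [Fintype m] (A : Matrix m m ℝ) : ℕ :=
  sInf {k : ℕ | ∃ B : Matrix m (Fin k) ℝ, ∃ C : Matrix (Fin k) (Fin k) ℝ,
    (∀ i j, 0 ≤ B i j) ∧ (∀ i j, 0 ≤ C i j) ∧ C.IsSymm ∧ A = B * C * Bᵀ}


noncomputable def nnRank {m n : Type*} [Fintype m] [Fintype n] (A : Matrix m n ℝ) : ℕ :=
  sInf {k : ℕ | ∃ U : Matrix m (Fin k) ℝ, ∃ V : Matrix n (Fin k) ℝ,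
    (∀ i j, 0 ≤ U i j) ∧ (∀ i j, 0 ≤ V i j) ∧ A = U * Vᵀ}

/-!
If `A = U Vᵀ` is a nonnegative factorization of a symmetric `A`, then also `A = V Uᵀ`, so
`A = ½ (U Vᵀ + V Uᵀ) = [U V] C [U V]ᵀ` with `C = [[0, ½ I], [½ I, 0]]`, a nonnegative symmetric
matrix of size twice the inner dimension of the factorization.
-/

theorem exists_nonneg_factorization_nnRank {m n : Type*} [Fintype m] [Fintype n]
    {A : Matrix m n ℝ} (hA : ∀ i j, 0 ≤ A i j) :
    ∃ U : Matrix m (Fin (nnRank A)) ℝ, ∃ V : Matrix n (Fin (nnRank A)) ℝ,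
      (∀ i j, 0 ≤ U i j) ∧ (∀ i j, 0 ≤ V i j) ∧ A = U * Vᵀ := by
  classical
  let e := (Fintype.equivFin n).symm
  refine Nat.sInf_mem (s := {k : ℕ | ∃ U : Matrix m (Fin k) ℝ, ∃ V : Matrix n (Fin k) ℝ,
    (∀ i j, 0 ≤ U i j) ∧ (∀ i j, 0 ≤ V i j) ∧ A = U * Vᵀ})
    ⟨_, A.submatrix id e, (1 : Matrix n n ℝ).submatrix id e, fun i j => hA _ _, fun i j => ?_, ?_⟩
  · rw [submatrix_apply, one_apply]
    positivity
  · rw [transpose_submatrix, submatrix_mul_equiv, transpose_one, Matrix.mul_one, submatrix_id_id]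

theorem sntRank_le_card {m ι : Type*} [Fintype m] [Fintype ι] {A : Matrix m m ℝ}
    (B : Matrix m ι ℝ) (C : Matrix ι ι ℝ) (hB : ∀ i j, 0 ≤ B i j) (hC : ∀ i j, 0 ≤ C i j)
    (hCs : C.IsSymm) (h : A = B * C * Bᵀ) :
    sntRank A ≤ Fintype.card ι := by
  let e := (Fintype.equivFin ι).symm
  refine Nat.sInf_le ⟨B.submatrix id e, C.submatrix e e, fun i j => hB _ _, fun i j => hC _ _,
    hCs.submatrix e, ?_⟩
  rw [transpose_submatrix, submatrix_mul_equiv, submatrix_mul_equiv, submatrix_id_id, h]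

theorem Matrix.IsSymm.eq_fromCols_mul_fromBlocks_mul_transpose {m ι R : Type*} [Fintype ι]
    [DecidableEq ι] [Field R] [NeZero (2 : R)] {A : Matrix m m R} (hA : A.IsSymm)
    {U V : Matrix m ι R} (hUV : A = U * Vᵀ) :
    A = fromCols U V * (Matrix.fromBlocks 0 ((1 / 2 : R) • 1) ((1 / 2 : R) • 1) 0 :
      Matrix (ι ⊕ ι) (ι ⊕ ι) R) * (fromCols U V)ᵀ := by
  have hVU : A = V * Uᵀ := by rw [← hA, hUV, Matrix.transpose_mul, transpose_transpose]
  rw [transpose_fromCols, Matrix.mul_assoc, fromBlocks_mul_fromRows, fromCols_mul_fromRows]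
  simp only [Matrix.zero_mul, zero_add, add_zero, smul_mul, Matrix.one_mul, Matrix.mul_smul,
    ← hUV, ← hVU, ← add_smul, add_halves, one_smul]

theorem stmt_9 {n : ℕ} (A : Matrix (Fin n) (Fin n) ℝ)
    (hA : A.IsSymm) (hApos : ∀ i j, 0 ≤ A i j) :
    sntRank A ≤ 2 * nnRank A := by
  obtain ⟨U, V, hU, hV, hUV⟩ := exists_nonneg_factorization_nnRank hApos
  have hcard : Fintype.card (Fin (nnRank A) ⊕ Fin (nnRank A)) = 2 * nnRank A := by
    rw [Fintype.card_sum, Fintype.card_fin, two_mul]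
  rw [← hcard]
  refine sntRank_le_card _ _ ?_ ?_ ?_ (hA.eq_fromCols_mul_fromBlocks_mul_transpose hUV)
  · rintro i (j | j)
    exacts [hU i j, hV i j]
  · rintro (i | i) (j | j) <;>
      simp only [fromBlocks_apply₁₁, fromBlocks_apply₁₂, fromBlocks_apply₂₁, fromBlocks_apply₂₂,
        Matrix.zero_apply, Matrix.smul_apply, one_apply] <;>
      positivity
  · exact isSymm_zero.fromBlocks (by rw [transpose_smul, transpose_one]) isSymm_zero
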